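/- The adjusted Shapley inconsistency value satisfies Minimality: if the rule-based inconsistency measure I satisfies free-formula independence (I(B) = I(B \ {α}) whenever α is free in B), and α is a free formula of the rule base B, then S*_α^I(B) = 0. -/

import Mathlib

open scoped Classical

/-- A rule over atoms `A`: literals are pairs (atom, sign). -/
structure Rule (A : Type*) where
  body : Finset (A × Bool)
  head : A × Bool
deriving DecidableEq

abbrev RuleBase (A : Type*) := Finset (Rule A)

variable {A : Type*}

/-- The complement of a literal. -/
def litCompl (l : A × Bool) : A × Bool := (l.1, !l.2)

/-- The fact with head `l` (empty body). -/
def factR (l : A × Bool) : Rule A := ⟨∅, l⟩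

/-- The facts (empty-body rules) of a rule base. -/
noncomputable def facts [DecidableEq A] (B : RuleBase A) : RuleBase A :=
  B.filter (fun r => r.body = ∅)

/-- The proper (non-fact) rules of a rule base. -/
noncomputable def properRules [DecidableEq A] (B : RuleBase A) : RuleBase A :=
  B.filter (fun r => r.body ≠ ∅)

/-- A set of literals is closed w.r.t. a rule base. -/
def Closed (B : RuleBase A) (M : Set (A × Bool)) : Prop :=
  ∀ r ∈ B, (↑r.body ⊆ M) → r.head ∈ M

/-- The minimal model: the smallest closed set of literals. -/
def minModel (B : RuleBase A) : Set (A × Bool) :=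
  {l | ∀ M : Set (A × Bool), Closed B M → l ∈ M}

/-- A set of literals is consistent if it contains no complementary pair. -/
def ConsistentLits (M : Set (A × Bool)) : Prop :=
  ¬ ∃ a : A, (a, true) ∈ M ∧ (a, false) ∈ M

/-- A rule base is consistent if its minimal model is consistent. -/
def Consistent (B : RuleBase A) : Prop := ConsistentLits (minModel B)

/-- The minimal inconsistent subsets of a rule base. -/
def MI (B : RuleBase A) : Set (RuleBase A) :=
  { M | M ⊆ B ∧ ¬ Consistent M ∧ ∀ M' ⊂ M, Consistent M' }

/-- `M` contains a complementary pair of facts. -/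
def hasComplFactPair (M : RuleBase A) : Prop :=
  ∃ a : A, factR (a, true) ∈ M ∧ factR (a, false) ∈ M

/-- Minimal inconsistent subsets containing no complementary pair of facts. -/
def MIF (B : RuleBase A) : Set (RuleBase A) :=
  { M ∈ MI B | ¬ hasComplFactPair M }

/-- A formula is free in a rule base if it belongs to no minimal inconsistent subset. -/
def Free (r : Rule A) (B : RuleBase A) : Prop := ∀ M ∈ MI B, r ∉ M

/-- Rule consistency: the rules together with any consistent set of facts are consistent. -/
def RuleConsistent [DecidableEq A] (B : RuleBase A) : Prop :=
  ∀ F' ⊆ facts B, Consistent F' → Consistent (properRules B ∪ F')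

/-- The drastic inconsistency measure. -/
noncomputable def Idr (B : RuleBase A) : ℕ := if Consistent B then 0 else 1

/-- The rule-based drastic inconsistency measure. -/
noncomputable def IRBd (B : RuleBase A) : ℕ := if MIF B = ∅ then 0 else 1

/-- The rule-based MI-inconsistency measure. -/
noncomputable def IRBMI (B : RuleBase A) : ℕ := (MIF B).ncard

/-- The rule-based problematic inconsistency measure: number of distinct
    non-fact rules occurring in some element of `MIF B`. -/
noncomputable def IRBp (B : RuleBase A) : ℕ :=
  {r : Rule A | r.body ≠ ∅ ∧ ∃ M ∈ MIF B, r ∈ M}.ncard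

/-- Three truth values. -/
inductive TV | t | b | f
deriving DecidableEq

def TV.negv : TV → TV
  | .t => .f
  | .f => .t
  | .b => .b

/-- Value of a literal under a three-valued interpretation. -/
def litVal (v : A → TV) (l : A × Bool) : TV :=
  if l.2 then v l.1 else (v l.1).negv

/-- Designated truth values. -/
def TV.des : TV → Prop
  | .f => False
  | _ => True

/-- Three-valued satisfaction of a rule. -/
def sat3 (v : A → TV) (r : Rule A) : Prop :=
  (∀ l ∈ r.body, (litVal v l).des) → (litVal v r.head).des

/-- The rule-based contension inconsistency measure. -/
noncomputable def IRBc (B : RuleBase A) : ℕ :=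
  sInf { n : ℕ | ∃ v : A → TV,
    (∀ M ∈ MIF B, ∀ r ∈ M, sat3 v r) ∧ n = {a : A | v a = TV.b}.ncard }

/-- The payoff of `α` in coalition `C` (w.r.t. rule base `B` and measure `I`). -/
noncomputable def CoalPayoff [DecidableEq A] (I : RuleBase A → ℝ) (B : RuleBase A)
    (α : Rule A) (C : RuleBase A) : ℝ :=
  ((Nat.factorial (C.card - 1) * Nat.factorial (B.card - C.card) : ℕ) : ℝ)
    / ((Nat.factorial B.card : ℕ) : ℝ) * (I C - I (C.erase α))

/-- The additional payoff shifted from facts to non-free rules. -/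
noncomputable def AddPayoff [DecidableEq A] (I : RuleBase A → ℝ) (B : RuleBase A)
    (r : Rule A) (C : RuleBase A) : ℝ :=
  if Free r C then 0
  else (∑ f ∈ C.filter (fun x => x.body = ∅), CoalPayoff I B f C)
        / ((C.filter (fun x => x.body ≠ ∅ ∧ ¬ Free x C)).card : ℝ)

/-- The adjusted Shapley inconsistency value. -/
noncomputable def Sstar [DecidableEq A] (I : RuleBase A → ℝ) (B : RuleBase A)
    (α : Rule A) : ℝ :=
  if α.body = ∅ then 0
  else ∑ C ∈ B.powerset, (CoalPayoff I B α C + AddPayoff I B α C)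

theorem Free.mono {r : Rule A} {B C : RuleBase A} (h : Free r B) (hCB : C ⊆ B) : Free r C :=
  fun M hM => h M ⟨hM.1.trans hCB, hM.2⟩

theorem CoalPayoff_eq_zero_of_free [DecidableEq A] {I : RuleBase A → ℝ}
    (hIN : ∀ (K : RuleBase A) (β : Rule A), β ∈ K → Free β K → I K = I (K.erase β))
    (B : RuleBase A) {α : Rule A} {C : RuleBase A} (h : Free α C) :
    CoalPayoff I B α C = 0 := by
  have hI : I C = I (C.erase α) := by
    by_cases hαC : α ∈ C
    · exact hIN C α hαC h
    · rw [Finset.erase_eq_of_notMem hαC]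
  rw [CoalPayoff, hI, sub_self, mul_zero]

theorem AddPayoff_eq_zero_of_free [DecidableEq A] (I : RuleBase A → ℝ) (B : RuleBase A)
    {r : Rule A} {C : RuleBase A} (h : Free r C) : AddPayoff I B r C = 0 :=
  if_pos h

theorem stmt13_general [DecidableEq A] (I : RuleBase A → ℝ) (B : RuleBase A) (α : Rule A)
    (hIN : ∀ (K : RuleBase A) (β : Rule A), β ∈ K → Free β K → I K = I (K.erase β))
    (hfree : Free α B) :
    Sstar I B α = 0 := by
  unfold Sstar
  split_ifs
  · rfl
  refine Finset.sum_eq_zero fun C hC => ?_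
  have hαC : Free α C := hfree.mono (Finset.mem_powerset.mp hC)
  rw [CoalPayoff_eq_zero_of_free hIN B hαC, AddPayoff_eq_zero_of_free I B hαC, add_zero]

theorem stmt13 [DecidableEq A] (I : RuleBase A → ℝ) (B : RuleBase A) (α : Rule A)
    (hIN : ∀ (K : RuleBase A) (β : Rule A), β ∈ K → Free β K → I K = I (K.erase β))
    (hmem : α ∈ B) (hfree : Free α B) :
    Sstar I B α = 0 :=
  stmt13_general I B α hIN hfree
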